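/- arXiv:1705.08992 — 4 statements merged into one kernel-verified Lean document; each statement's English description precedes it below -/
import Mathlib

section
/- Let U be a finite set with n = |U|, let T₁,…,Tₘ be nonempty subsets of U, and let r be a new vertex not in U. Form the graph G on vertex set U ∪ {r} whose edges are all pairs within U (each of weight 1) together with edges {r,u} for each u ∈ U (each of weight n³). Let the required vertex subsets be S_{i,j} = {uᵢ,uⱼ} for all pairs i < j, and S'ᵢ = Tᵢ ∪ {r} for each i. Then the minimum weight h of an edge set F ⊆ E(G) containing a spanning tree of the induced subgraph on each required subset equals h'·n³ + C(n,2), where h' is the minimum cardinality of a set C ⊆ U intersecting every Tᵢ. -/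
/-!
Connectivity of the subgraph induced on a pair `{u, v}` forces the edge `uv` itself, so every
feasible edge set contains all `C(n, 2)` edges of `K_U`; its other edges are star edges `ru`.
Connectivity on `Tᵢ ∪ {r}` forces an edge from `r` into `Tᵢ`, so the endpoints of the star edges
form a hitting set `C`, and conversely `K_U` together with the star edges to any hitting set is
feasible. Hence the feasible edge sets are exactly `K_U ∪ {ru : u ∈ C}` for hitting sets `C`, of
weight `|C| n³ + C(n, 2)`, and minimizing one side minimizes the other.
-/

open Finset

namespace SimpleGraph

variable {V : Type*} {G : SimpleGraph V} {S : Set V}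

lemma induce_connected_of_forall_adj {c : V} (hc : c ∈ S) (h : ∀ a ∈ S, a ≠ c → G.Adj a c) :
    (G.induce S).Connected := by
  rw [connected_iff_exists_forall_reachable]
  refine ⟨⟨c, hc⟩, fun ⟨a, ha⟩ => ?_⟩
  by_cases hac : a = c
  · subst hac; rfl
  · exact Adj.reachable (G := G.induce S) (h a ha hac).symm

lemma Connected.exists_adj_of_induce {a b : V} (h : (G.induce S).Connected) (ha : a ∈ S)
    (hb : b ∈ S) (hab : a ≠ b) : ∃ c ∈ S, G.Adj a c := by
  obtain ⟨p⟩ := h.preconnected ⟨a, ha⟩ ⟨b, hb⟩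
  exact ⟨_, p.snd.2, p.adj_snd (p.not_nil_of_ne (by simpa using hab))⟩

lemma induce_pair_connected_iff {u v : V} (huv : u ≠ v) :
    (G.induce {u, v}).Connected ↔ G.Adj u v := by
  refine ⟨fun h => ?_, induce_pair_connected_of_adj⟩
  obtain ⟨c, hc | hc, hadj⟩ := h.exists_adj_of_induce (by simp) (by simp) huv
  · exact absurd hc (G.ne_of_adj hadj).symm
  · rwa [← hc]

lemma Connected.exists_adj_of_induce_union_singleton {r b : V}
    (h : (G.induce (S ∪ {r})).Connected) (hb : b ∈ S) (hbr : b ≠ r) : ∃ c ∈ S, G.Adj r c := by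
  obtain ⟨c, hc | hc, hadj⟩ := h.exists_adj_of_induce (Or.inr rfl) (Or.inl hb) hbr.symm
  · exact ⟨c, hc, hadj⟩
  · exact absurd (Set.mem_singleton_iff.mp hc) (G.ne_of_adj hadj).symm

end SimpleGraph

namespace HittingSetReduction

open SimpleGraph

variable {V ι : Type*} [DecidableEq V]

def completeEdges (U : Finset V) : Finset (Sym2 V) :=
  ((U ×ˢ U).filter (fun p => p.1 ≠ p.2)).image (fun p => s(p.1, p.2))

def starEdges (r : V) (C : Finset V) : Finset (Sym2 V) :=
  C.image (fun u => s(r, u))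

def IsHittingSet (U : Finset V) (T : ι → Finset V) (C : Finset V) : Prop :=
  C ⊆ U ∧ ∀ i, (T i ∩ C).Nonempty

def IsSpanningTreeHittingSet (U : Finset V) (r : V) (T : ι → Finset V)
    (F : Finset (Sym2 V)) : Prop :=
  F ⊆ completeEdges U ∪ starEdges r U ∧
    (∀ u ∈ U, ∀ v ∈ U, u ≠ v → ((fromEdgeSet (F : Set (Sym2 V))).induce {u, v}).Connected) ∧
    ∀ i, ((fromEdgeSet (F : Set (Sym2 V))).induce ((T i : Set V) ∪ {r})).Connected

variable {U C : Finset V} {r : V} {T : ι → Finset V} {F : Finset (Sym2 V)}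

lemma mem_of_mem_starEdges {e : Sym2 V} (he : e ∈ starEdges r C) : r ∈ e := by
  obtain ⟨u, -, rfl⟩ := mem_image.mp he
  exact Sym2.mem_mk_left r u

lemma mk_mem_completeEdges {a b : V} (ha : a ∈ U) (hb : b ∈ U) (hab : a ≠ b) :
    s(a, b) ∈ completeEdges U :=
  mem_image.mpr ⟨(a, b), by simp [ha, hb, hab], rfl⟩

lemma exists_of_mem_completeEdges {e : Sym2 V} (he : e ∈ completeEdges U) :
    ∃ a ∈ U, ∃ b ∈ U, a ≠ b ∧ s(a, b) = e := by
  obtain ⟨⟨a, b⟩, hab, rfl⟩ := mem_image.mp he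
  simp only [mem_filter, mem_product] at hab
  exact ⟨a, hab.1.1, b, hab.1.2, hab.2, rfl⟩

lemma card_completeEdges (U : Finset V) : #(completeEdges U) = (#U).choose 2 := by
  have : (U ×ˢ U).filter (fun p => p.1 ≠ p.2) = U.offDiag := by
    ext p
    simp [and_assoc]
  rw [completeEdges, this, ← Sym2.card_image_offDiag]
  rfl

lemma notMem_of_mem_completeEdges (hr : r ∉ U) {e : Sym2 V} (he : e ∈ completeEdges U) :
    r ∉ e := by
  obtain ⟨a, ha, b, hb, -, rfl⟩ := exists_of_mem_completeEdges he
  rw [Sym2.mem_iff]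
  rintro (rfl | rfl) <;> contradiction

lemma card_starEdges : #(starEdges r C) = #C :=
  card_image_of_injective _ (Sym2.mkEmbedding r).injective

lemma sum_completeEdges_union_starEdges (hr : r ∉ U) {w : ℕ} (wt : Sym2 V → ℕ)
    (hwt : ∀ e, wt e = if r ∈ e then w else 1) :
    ∑ e ∈ completeEdges U ∪ starEdges r C, wt e = #C * w + (#U).choose 2 := by
  have hdisj : Disjoint (completeEdges U) (starEdges r C) :=
    disjoint_left.mpr fun e he he' =>
      notMem_of_mem_completeEdges hr he (mem_of_mem_starEdges he')
  rw [sum_union hdisj, add_comm,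
    sum_congr rfl fun e he => (hwt e).trans (if_neg (notMem_of_mem_completeEdges hr he)),
    sum_congr rfl fun e he => (hwt e).trans (if_pos (mem_of_mem_starEdges he))]
  simp only [sum_const, smul_eq_mul, card_starEdges, card_completeEdges, mul_one]

namespace IsSpanningTreeHittingSet

lemma completeEdges_subset (hF : IsSpanningTreeHittingSet U r T F) : completeEdges U ⊆ F := by
  intro e he
  obtain ⟨a, ha, b, hb, hab, rfl⟩ := exists_of_mem_completeEdges he
  exact ((fromEdgeSet_adj _).mp ((induce_pair_connected_iff hab).mp (hF.2.1 a ha b hb hab))).1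

lemma isHittingSet_filter (hr : r ∉ U) (hTsub : ∀ i, T i ⊆ U) (hTne : ∀ i, (T i).Nonempty)
    (hF : IsSpanningTreeHittingSet U r T F) :
    IsHittingSet U T (U.filter fun u => s(r, u) ∈ F) := by
  refine ⟨filter_subset _ _, fun i => ?_⟩
  obtain ⟨t, ht⟩ := hTne i
  obtain ⟨c, hc, hadj⟩ := (hF.2.2 i).exists_adj_of_induce_union_singleton (mem_coe.mpr ht)
    fun h => hr (h ▸ hTsub i ht)
  exact ⟨c, mem_inter.mpr ⟨hc, mem_filter.mpr ⟨hTsub i hc, ((fromEdgeSet_adj _).mp hadj).1⟩⟩⟩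

lemma eq_completeEdges_union_starEdges (hF : IsSpanningTreeHittingSet U r T F) :
    F = completeEdges U ∪ starEdges r (U.filter fun u => s(r, u) ∈ F) := by
  refine Subset.antisymm (fun e he => ?_) (union_subset hF.completeEdges_subset fun e he => ?_)
  · rcases mem_union.mp (hF.1 he) with h | h
    · exact mem_union_left _ h
    · obtain ⟨u, hu, rfl⟩ := mem_image.mp h
      exact mem_union_right _ (mem_image_of_mem _ (mem_filter.mpr ⟨hu, he⟩))
  · obtain ⟨u, hu, rfl⟩ := mem_image.mp he
    exact (mem_filter.mp hu).2

end IsSpanningTreeHittingSet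

lemma isSpanningTreeHittingSet_completeEdges_union_starEdges (hTsub : ∀ i, T i ⊆ U)
    (hC : IsHittingSet U T C) :
    IsSpanningTreeHittingSet U r T (completeEdges U ∪ starEdges r C) := by
  refine ⟨union_subset_union subset_rfl (image_subset_image hC.1), fun u hu v hv huv => ?_,
    fun i => ?_⟩
  · exact induce_pair_connected_of_adj
      ((fromEdgeSet_adj _).mpr ⟨mem_union_left _ (mk_mem_completeEdges hu hv huv), huv⟩)
  · obtain ⟨c, hc⟩ := hC.2 i
    obtain ⟨hcT, hcC⟩ := mem_inter.mp hc
    refine induce_connected_of_forall_adj (Or.inl hcT) fun a ha hac =>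
      (fromEdgeSet_adj _).mpr ⟨?_, hac⟩
    rcases ha with ha | rfl
    · exact mem_union_left _ (mk_mem_completeEdges (hTsub i ha) (hC.1 hcC) hac)
    · exact mem_union_right _ (mem_image_of_mem _ hcC)

lemma isSpanningTreeHittingSet_iff (hr : r ∉ U) (hTsub : ∀ i, T i ⊆ U)
    (hTne : ∀ i, (T i).Nonempty) :
    IsSpanningTreeHittingSet U r T F ↔
      ∃ C, IsHittingSet U T C ∧ F = completeEdges U ∪ starEdges r C := by
  refine ⟨fun hF => ⟨_, hF.isHittingSet_filter hr hTsub hTne, hF.eq_completeEdges_union_starEdges⟩,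
    ?_⟩
  rintro ⟨C, hC, rfl⟩
  exact isSpanningTreeHittingSet_completeEdges_union_starEdges hTsub hC

lemma weights_eq_image (hr : r ∉ U) (hTsub : ∀ i, T i ⊆ U) (hTne : ∀ i, (T i).Nonempty)
    {w : ℕ} (wt : Sym2 V → ℕ) (hwt : ∀ e, wt e = if r ∈ e then w else 1) :
    {x | ∃ F, IsSpanningTreeHittingSet U r T F ∧ x = ∑ e ∈ F, wt e} =
      (fun c => c * w + (#U).choose 2) '' {c | ∃ C, IsHittingSet U T C ∧ c = #C} := by
  ext x
  simp only [isSpanningTreeHittingSet_iff hr hTsub hTne, Set.mem_ofPred_eq, Set.mem_image]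
  constructor <;> rintro ⟨_, ⟨C, hC, rfl⟩, rfl⟩ <;>
    exact ⟨_, ⟨C, hC, rfl⟩, (sum_completeEdges_union_starEdges hr wt hwt).symm⟩

lemma sInf_weights (hr : r ∉ U) (hTsub : ∀ i, T i ⊆ U) (hTne : ∀ i, (T i).Nonempty)
    {w : ℕ} (wt : Sym2 V → ℕ) (hwt : ∀ e, wt e = if r ∈ e then w else 1) :
    sInf {x | ∃ F, IsSpanningTreeHittingSet U r T F ∧ x = ∑ e ∈ F, wt e} =
      sInf {c | ∃ C, IsHittingSet U T C ∧ c = #C} * w + (#U).choose 2 := by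
  have hU : IsHittingSet U T U :=
    ⟨subset_rfl, fun i => by rw [inter_eq_left.mpr (hTsub i)]; exact hTne i⟩
  have hne : {c | ∃ C, IsHittingSet U T C ∧ c = #C}.Nonempty := ⟨_, U, hU, rfl⟩
  have hmono : Monotone fun c => c * w + (#U).choose 2 := fun a b hab => by
    simp only
    gcongr
  rw [weights_eq_image hr hTsub hTne wt hwt, ← hmono.map_csInf hne]

end HittingSetReduction

open HittingSetReduction in
theorem min_spanning_tree_hitting_set_weight_general
    {V : Type} [DecidableEq V]
    (U : Finset V) (r : V) (hr : r ∉ U)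
    (n : ℕ) (hn : n = U.card)
    (m : ℕ) (T : Fin m → Finset V)
    (hTsub : ∀ i, T i ⊆ U) (hTne : ∀ i, (T i).Nonempty)
    -- the complete graph `K_U` on `U` and the star edges at `r`
    (KU Star : Finset (Sym2 V))
    (hKU : KU = ((U ×ˢ U).filter (fun p => p.1 ≠ p.2)).image (fun p => s(p.1, p.2)))
    (hStar : Star = U.image (fun u => s(r, u)))
    -- edge weights: `n^3` on edges incident with `r`, and `1` on edges within `U`
    (wt : Sym2 V → ℕ) (hwt : ∀ e, wt e = if r ∈ e then n ^ 3 else 1)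
    -- `Conn F S` : `F` contains a spanning tree of the subgraph induced on `S`
    (Conn : Finset (Sym2 V) → Set V → Prop)
    (hConn : ∀ F S, Conn F S ↔
      ((SimpleGraph.fromEdgeSet (↑F : Set (Sym2 V))).induce S).Connected)
    -- `STHS F` : `F` is a spanning-tree hitting set for all required subsets
    (STHS : Finset (Sym2 V) → Prop)
    (hSTHS : ∀ F, STHS F ↔ (F ⊆ KU ∪ Star ∧
      (∀ u ∈ U, ∀ v ∈ U, u ≠ v → Conn F {u, v}) ∧
      (∀ i : Fin m, Conn F ((↑(T i) : Set V) ∪ {r})))) :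
    sInf {w : ℕ | ∃ F, STHS F ∧ w = ∑ e ∈ F, wt e}
      = (sInf {c : ℕ | ∃ C : Finset V, C ⊆ U ∧ (∀ i, (T i ∩ C).Nonempty) ∧ c = C.card})
          * n ^ 3 + n.choose 2 := by
  subst hn hKU hStar
  have hSTHS' : STHS = IsSpanningTreeHittingSet U r T := by
    ext F
    simp only [hSTHS, hConn]
    rfl
  simp only [hSTHS', sInf_weights hr hTsub hTne wt hwt, IsHittingSet, and_assoc]

/-- In the weighted reduction from Min Hitting Set, the minimum weight `h` of a
spanning-tree hitting set equals `h' * n^3 + C(n,2)`, where `h'` is the minimum cardinality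
of a hitting set for the family `T₁, …, Tₘ`. -/
theorem min_spanning_tree_hitting_set_weight
    {V : Type} [Fintype V] [DecidableEq V]
    (U : Finset V) (r : V) (hr : r ∉ U)
    (n : ℕ) (hn : n = U.card)
    (m : ℕ) (T : Fin m → Finset V)
    (hTsub : ∀ i, T i ⊆ U) (hTne : ∀ i, (T i).Nonempty)
    -- the complete graph `K_U` on `U` and the star edges at `r`
    (KU Star : Finset (Sym2 V))
    (hKU : KU = ((U ×ˢ U).filter (fun p => p.1 ≠ p.2)).image (fun p => s(p.1, p.2)))
    (hStar : Star = U.image (fun u => s(r, u)))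
    -- edge weights: `n^3` on edges incident with `r`, and `1` on edges within `U`
    (wt : Sym2 V → ℕ) (hwt : ∀ e, wt e = if r ∈ e then n ^ 3 else 1)
    -- `Conn F S` : `F` contains a spanning tree of the subgraph induced on `S`
    (Conn : Finset (Sym2 V) → Set V → Prop)
    (hConn : ∀ F S, Conn F S ↔
      ((SimpleGraph.fromEdgeSet (↑F : Set (Sym2 V))).induce S).Connected)
    -- `STHS F` : `F` is a spanning-tree hitting set for all required subsets
    (STHS : Finset (Sym2 V) → Prop)
    (hSTHS : ∀ F, STHS F ↔ (F ⊆ KU ∪ Star ∧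
      (∀ u ∈ U, ∀ v ∈ U, u ≠ v → Conn F {u, v}) ∧
      (∀ i : Fin m, Conn F ((↑(T i) : Set V) ∪ {r})))) :
    sInf {w : ℕ | ∃ F, STHS F ∧ w = ∑ e ∈ F, wt e}
      = (sInf {c : ℕ | ∃ C : Finset V, C ⊆ U ∧ (∀ i, (T i ∩ C).Nonempty) ∧ c = C.card})
          * n ^ 3 + n.choose 2 :=
  min_spanning_tree_hitting_set_weight_general U r hr n hn m T hTsub hTne KU Star hKU hStar wt hwt
    Conn hConn STHS hSTHS
end

section
/- With the construction above, if F is any spanning-tree hitting set for the instance, then every edge of the complete graph K_U on U belongs to F, and the set C = { u ∈ U : {r,u} ∈ F } is a hitting set for the family T₁,…,Tₘ. -/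
/-- Every spanning-tree hitting set `F` for the weighted reduction instance
contains all of `K_U`, and `C = {u ∈ U : {r,u} ∈ F}` is a hitting set for `T₁, …, Tₘ`. -/
theorem spanning_tree_hitting_set_gives_hitting_set
    {V : Type} [Fintype V] [DecidableEq V]
    (U : Finset V) (r : V) (hr : r ∉ U)
    (m : ℕ) (T : Fin m → Finset V)
    (hTsub : ∀ i, T i ⊆ U) (hTne : ∀ i, (T i).Nonempty)
    (KU Star : Finset (Sym2 V))
    (hKU : KU = ((U ×ˢ U).filter (fun p => p.1 ≠ p.2)).image (fun p => s(p.1, p.2)))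
    (hStar : Star = U.image (fun u => s(r, u)))
    (Conn : Finset (Sym2 V) → Set V → Prop)
    (hConn : ∀ F S, Conn F S ↔
      ((SimpleGraph.fromEdgeSet (↑F : Set (Sym2 V))).induce S).Connected)
    (F : Finset (Sym2 V))
    -- `F` is a spanning-tree hitting set for the instance:
    (hFsub : F ⊆ KU ∪ Star)
    (hFpairs : ∀ u ∈ U, ∀ v ∈ U, u ≠ v → Conn F {u, v})
    (hFsets : ∀ i : Fin m, Conn F ((↑(T i) : Set V) ∪ {r})) :
    KU ⊆ F ∧ (∀ i : Fin m, ∃ u ∈ T i, u ∈ U.filter (fun u => s(r, u) ∈ F)) := by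
  have key : ∀ (S : Set V) (a : V), a ∈ S → Conn F S → ∀ b ∈ S, b ≠ a →
      ∃ w ∈ S, w ≠ a ∧ s(a, w) ∈ F := by
    intro S a ha hc b hb hne
    rw [hConn] at hc
    obtain ⟨p⟩ := hc.preconnected ⟨a, ha⟩ ⟨b, hb⟩
    cases p with
    | nil => exact absurd rfl hne
    | @cons _ w _ hadj p' =>
      simp only [SimpleGraph.comap_adj, SimpleGraph.fromEdgeSet_adj,
        Finset.mem_coe] at hadj
      exact ⟨w.1, w.2, Ne.symm hadj.2, hadj.1⟩
  constructor
  · intro e he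
    rw [hKU] at he
    simp only [Finset.mem_image, Finset.mem_filter, Finset.mem_product] at he
    obtain ⟨⟨u, v⟩, ⟨⟨hu, hv⟩, huv⟩, rfl⟩ := he
    obtain ⟨w, hwS, hwne, hwF⟩ := key {u, v} u (by simp) (hFpairs u hu v hv huv)
      v (by simp) (Ne.symm huv)
    rcases hwS with rfl | rfl
    · exact absurd rfl hwne
    · exact hwF
  · intro i
    obtain ⟨u, hu⟩ := hTne i
    have huU : u ∈ U := hTsub i hu
    have hur : u ≠ r := fun h => hr (h ▸ huU)
    obtain ⟨w, hwS, hwne, hwF⟩ := key ((↑(T i) : Set V) ∪ {r}) r (by simp)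
      (hFsets i) u (Or.inl hu) hur
    rcases hwS with hwT | hw
    · exact ⟨w, hwT, Finset.mem_filter.mpr ⟨hTsub i hwT, hwF⟩⟩
    · exact absurd hw hwne
end

section
/- With the construction above, if C ⊆ U is a hitting set for T₁,…,Tₘ, then F = K_U ∪ { {r,u} : u ∈ C } is a spanning-tree hitting set: F contains a spanning tree of the induced subgraph on each S_{i,j} and each S'ᵢ = Tᵢ ∪ {r}. -/
lemma hub_connected {V : Type} (G : SimpleGraph V) (S : Set V) (w : V) (hw : w ∈ S)
    (h : ∀ x ∈ S, x ≠ w → G.Adj x w) : (G.induce S).Connected := by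
  rw [SimpleGraph.connected_iff]
  refine ⟨?_, ⟨⟨w, hw⟩⟩⟩
  intro x y
  have key : ∀ z : S, (G.induce S).Reachable z ⟨w, hw⟩ := by
    intro z
    by_cases hz : (z : V) = w
    · have : z = ⟨w, hw⟩ := Subtype.ext hz
      rw [this]
    · exact SimpleGraph.Adj.reachable (h z z.2 hz)
  exact (key x).trans (key y).symm

/-- If `C ⊆ U` is a hitting set for `T₁, …, Tₘ`, then
`F = K_U ∪ {{r,u} : u ∈ C}` is a spanning-tree hitting set for the reduction instance:
it contains a spanning tree of the induced subgraph on each `S_{i,j} = {uᵢ,uⱼ}` and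
each `S'ᵢ = Tᵢ ∪ {r}`. -/
theorem hitting_set_gives_spanning_tree_hitting_set
    {V : Type} [Fintype V] [DecidableEq V]
    (U : Finset V) (r : V) (hr : r ∉ U)
    (m : ℕ) (T : Fin m → Finset V)
    (hTsub : ∀ i, T i ⊆ U) (hTne : ∀ i, (T i).Nonempty)
    (KU : Finset (Sym2 V))
    (hKU : KU = ((U ×ˢ U).filter (fun p => p.1 ≠ p.2)).image (fun p => s(p.1, p.2)))
    (Conn : Finset (Sym2 V) → Set V → Prop)
    (hConn : ∀ F S, Conn F S ↔
      ((SimpleGraph.fromEdgeSet (↑F : Set (Sym2 V))).induce S).Connected)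
    (C : Finset V) (hC : C ⊆ U) (hhit : ∀ i, (T i ∩ C).Nonempty)
    (F : Finset (Sym2 V)) (hF : F = KU ∪ C.image (fun u => s(r, u))) :
    (∀ u ∈ U, ∀ v ∈ U, u ≠ v → Conn F {u, v}) ∧
    (∀ i : Fin m, Conn F ((↑(T i) : Set V) ∪ {r})) := by
  have hmemU : ∀ u ∈ U, ∀ v ∈ U, u ≠ v → s(u, v) ∈ F := by
    intro u hu v hv huv
    rw [hF, Finset.mem_union, hKU]
    left
    exact Finset.mem_image.mpr ⟨(u, v), by simp [hu, hv, huv], rfl⟩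
  have hmemC : ∀ c ∈ C, s(r, c) ∈ F := by
    intro c hc
    rw [hF, Finset.mem_union]
    exact Or.inr (Finset.mem_image_of_mem _ hc)
  have hadj : ∀ a b, s(a, b) ∈ F → a ≠ b →
      (SimpleGraph.fromEdgeSet (↑F : Set (Sym2 V))).Adj a b := by
    intro a b h hab
    rw [SimpleGraph.fromEdgeSet_adj]
    exact ⟨by simpa using h, hab⟩
  constructor
  · intro u hu v hv huv
    rw [hConn]
    apply hub_connected _ _ u (by simp)
    intro x hx hxu
    have hxv : x = v := by
      rcases hx with h | h
      · exact absurd h hxu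
      · exact h
    subst hxv
    exact hadj x u (hmemU x hv u hu (Ne.symm huv)) (Ne.symm huv)
  · intro i
    obtain ⟨w, hw⟩ := hhit i
    rw [Finset.mem_inter] at hw
    rw [hConn]
    apply hub_connected _ _ w (Or.inl (by exact_mod_cast hw.1))
    intro x hx hxw
    rcases hx with hx | hx
    · have hxU : x ∈ U := hTsub i (by exact_mod_cast hx)
      exact hadj x w (hmemU x hxU w (hTsub i hw.1) hxw) hxw
    · have hxr : x = r := hx
      subst hxr
      exact hadj x w ((Sym2.eq_swap ▸ hmemC w hw.2 : s(x,w) ∈ F)) hxw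
end

section
/- Let f : Finset E → ℕ be a monotone submodular function on subsets of a finite set E with f(∅) = 0. Suppose the greedy algorithm builds F₀ = ∅ and Fᵢ = Fᵢ₋₁ ∪ {eᵢ} where eᵢ maximizes the marginal gain pᵢ = f(Fᵢ₋₁ ∪ {e}) − f(Fᵢ₋₁) over e ∉ Fᵢ₋₁, halting after s steps when f(F_s) = f(E). If O is any set with f(O) = f(E), then s ≤ |O| · H(f(E)), where H(m) = Σ_{t=1}^{m} 1/t is the harmonic number. -/
/-- The greedy algorithm for maximizing an integer-valued monotone submodular
function `f` with `f(∅) = 0` halts, upon reaching `f(F_s) = f(E)`, after at most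
`|O| · H(f(E))` steps, for any set `O` with `f(O) = f(E)`. -/
theorem greedy_submodular_cover_bound
    {E : Type} [Fintype E] [DecidableEq E]
    (f : Finset E → ℕ)
    (hmono : ∀ A B : Finset E, A ⊆ B → f A ≤ f B)
    (hsub : ∀ (A B : Finset E) (e : E), A ⊆ B → e ∉ B →
      f (insert e B) + f A ≤ f (insert e A) + f B)
    (h0 : f ∅ = 0)
    (s : ℕ) (F : ℕ → Finset E) (e : ℕ → E)
    (hF0 : F 0 = ∅)
    (hstep : ∀ i, 1 ≤ i → i ≤ s → e i ∉ F (i - 1) ∧ F i = insert (e i) (F (i - 1)))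
    (hgreedy : ∀ i, 1 ≤ i → i ≤ s → ∀ x ∉ F (i - 1),
      f (insert x (F (i - 1))) ≤ f (F i))
    (hhalt : f (F s) = f Finset.univ)
    (hrun : ∀ i < s, f (F i) ≠ f Finset.univ)
    (O : Finset E) (hO : f O = f Finset.univ) :
    (s : ℚ) ≤ (O.card : ℚ) * ∑ t ∈ Finset.Icc 1 (f Finset.univ), (1 : ℚ) / t := by
  classical
  set m := f Finset.univ with hm
  -- submodular extension lemma
  have ext : ∀ (A T : Finset E), Disjoint A T →
      f (A ∪ T) + T.card * f A ≤ (∑ x ∈ T, f (insert x A)) + f A := by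
    intro A T
    induction T using Finset.induction_on with
    | empty => intro _; simp
    | @insert a T ha ih =>
      intro hdisj
      rw [Finset.disjoint_insert_right] at hdisj
      obtain ⟨haA, hdisj⟩ := hdisj
      have h1 := ih hdisj
      have h2 := hsub A (A ∪ T) a Finset.subset_union_left
        (by simp [haA, ha])
      rw [Finset.union_insert, Finset.sum_insert ha, Finset.card_insert_of_notMem ha]
      have : (T.card + 1) * f A = T.card * f A + f A := by ring
      rw [this]
      linarith
  have key : ∀ i ≤ s, (i : ℚ) ≤
      (O.card : ℚ) * ∑ t ∈ Finset.Ioc (m - f (F i)) m, (1 : ℚ) / t := by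
    intro i
    induction i with
    | zero =>
      intro _
      simp [hF0, h0]
    | succ i ih =>
      intro his
      have hi : i ≤ s := Nat.le_of_succ_le his
      have ihq := ih hi
      obtain ⟨hes, hFs⟩ := hstep (i + 1) (Nat.le_add_left 1 i) his
      simp only [Nat.add_sub_cancel] at hes hFs
      -- basic facts
      have hfle : f (F i) ≤ m := hmono _ _ (Finset.subset_univ _)
      have hfne : f (F i) ≠ m := hrun i (Nat.lt_of_succ_le his)
      have hflt : f (F i) < m := lt_of_le_of_ne hfle hfne
      have hfle' : f (F (i + 1)) ≤ m := hmono _ _ (Finset.subset_univ _)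
      have hmon' : f (F i) ≤ f (F (i + 1)) := by
        rw [hFs]; exact hmono _ _ (Finset.subset_insert _ _)
      -- key inequality : m ≤ O.card * (f (F (i+1)) - f (F i)) + f (F i)
      have hdisj : Disjoint (F i) (O \ F i) := Finset.disjoint_sdiff
      have hext := ext (F i) (O \ F i) hdisj
      have hunion : F i ∪ (O \ F i) = F i ∪ O := Finset.union_sdiff_self_eq_union
      have hfull : f (F i ∪ O) = m := le_antisymm (hmono _ _ (Finset.subset_univ _))
        (hO ▸ hmono _ _ Finset.subset_union_right)
      have hsum : (∑ x ∈ O \ F i, f (insert x (F i))) ≤ (O \ F i).card * f (F (i + 1)) := by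
        have := Finset.sum_le_card_nsmul (O \ F i) (fun x => f (insert x (F i)))
          (f (F (i + 1))) (fun x hx => by
            have hxF : x ∉ F i := (Finset.mem_sdiff.mp hx).2
            have := hgreedy (i + 1) (Nat.le_add_left 1 i) his x (by simpa using hxF)
            simpa using this)
        simpa [smul_eq_mul] using this
      rw [hunion, hfull] at hext
      obtain ⟨p, hfnext⟩ : ∃ p, f (F (i + 1)) = f (F i) + p :=
        ⟨f (F (i + 1)) - f (F i), by omega⟩
      have hkey : m ≤ O.card * p + f (F i) := by
        have hc : (O \ F i).card ≤ O.card := Finset.card_le_card (Finset.sdiff_subset)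
        have h3 : (O \ F i).card * f (F (i + 1)) =
            (O \ F i).card * f (F i) + (O \ F i).card * p := by rw [hfnext]; ring
        have h4 : (O \ F i).card * p ≤ O.card * p := Nat.mul_le_mul_right p hc
        linarith [hext, hsum, h3, h4]
      have hppos : 1 ≤ p := by
        rcases Nat.eq_zero_or_pos p with h | h
        · subst h; simp at hkey; omega
        · exact h
      set a := m - f (F (i + 1)) with hadef
      set b := m - f (F i) with hbdef
      have hab : a < b := by omega
      have hbm : b ≤ m := by omega
      have hbpos : 0 < b := by omega
      have hba : b - a = p := by omega
      have hbO : b ≤ O.card * (b - a) := by rw [hba]; omega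
      -- split the sum
      have hsplit : ∑ t ∈ Finset.Ioc a m, (1 : ℚ) / t =
          (∑ t ∈ Finset.Ioc a b, (1 : ℚ) / t) + ∑ t ∈ Finset.Ioc b m, (1 : ℚ) / t :=
        (Finset.sum_Ioc_consecutive _ (le_of_lt hab) hbm).symm
      have hlb : ((b - a : ℕ) : ℚ) * (1 / b) ≤ ∑ t ∈ Finset.Ioc a b, (1 : ℚ) / t := by
        have hcard : (Finset.Ioc a b).card = b - a := Nat.card_Ioc a b
        calc ((b - a : ℕ) : ℚ) * (1 / b)
            = (Finset.Ioc a b).card • ((1 : ℚ) / b) := by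
              rw [hcard, nsmul_eq_mul]
          _ ≤ ∑ t ∈ Finset.Ioc a b, (1 : ℚ) / t := by
              apply Finset.card_nsmul_le_sum
              intro t ht
              obtain ⟨h1, h2⟩ := Finset.mem_Ioc.mp ht
              have ht0 : 0 < t := Nat.lt_of_le_of_lt (Nat.zero_le a) h1
              apply one_div_le_one_div_of_le
              · exact_mod_cast ht0
              · exact_mod_cast h2
      have hOnn : (0 : ℚ) ≤ (O.card : ℚ) := Nat.cast_nonneg _
      have h2 : (1 : ℚ) ≤ (O.card : ℚ) * ∑ t ∈ Finset.Ioc a b, (1 : ℚ) / t := by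
        have h3 := mul_le_mul_of_nonneg_left hlb hOnn
        have hb' : (b : ℚ) ≤ (O.card : ℚ) * ((b - a : ℕ) : ℚ) := by exact_mod_cast hbO
        have hbpos' : (0 : ℚ) < (b : ℚ) := by exact_mod_cast hbpos
        calc (1 : ℚ) = (b : ℚ) * (1 / b) := by field_simp
          _ ≤ ((O.card : ℚ) * ((b - a : ℕ) : ℚ)) * (1 / b) := by
              apply mul_le_mul_of_nonneg_right hb'
              positivity
          _ = (O.card : ℚ) * (((b - a : ℕ) : ℚ) * (1 / b)) := by ring
          _ ≤ _ := h3
      push_cast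
      rw [hsplit, mul_add]
      linarith
  have hfin := key s le_rfl
  rw [hhalt] at hfin
  have : Finset.Ioc (m - m) m = Finset.Icc 1 m := by
    rw [Nat.sub_self]
    ext t; simp; omega
  rw [this] at hfin
  exact hfin
end
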